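/- (Theorem 2, inverse probability weighting identification for the control-arm mean.) Under the sensitivity parametrization, with weight w0(X) = e(X)·ε0(X) + 1 − e(X), the mean of the potential outcome under control is identified as E[Y(0)] = E[w0(X)·(1−Z)·Y / (1−e(X))]. -/

import Mathlib

/-!
Conditionally on `X`, `E[Y(0) | X] = E[Z Y(0) | X] + E[(1 - Z) Y(0) | X]`, and the sensitivity
relation rewrites the first term as `ε₀ e / (1 - e)` times the second, so
`E[Y(0) | X] = w₀(X) / (1 - e(X)) · E[(1 - Z) Y | X]` because `(1 - Z) Y = (1 - Z) Y(0)`.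
Taking expectations and moving the `X`-measurable weight back inside the conditional
expectation gives the weighted mean of `(1 - Z) Y`.
-/

open MeasureTheory

namespace MeasureTheory

variable {Ω : Type*} {m mΩ : MeasurableSpace Ω} {μ : Measure Ω}

theorem Integrable.mul_of_zero_or_one {Z f : Ω → ℝ} (hf : Integrable f μ)
    (hZ : AEStronglyMeasurable Z μ) (hZ01 : ∀ ω, Z ω = 0 ∨ Z ω = 1) :
    Integrable (fun ω => Z ω * f ω) μ :=
  hf.bdd_mul hZ (c := 1) <| .of_forall fun ω => by rcases hZ01 ω with h | h <;> simp [h]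

theorem Integrable.one_sub_mul_of_zero_or_one {Z f : Ω → ℝ} (hf : Integrable f μ)
    (hZ : AEStronglyMeasurable Z μ) (hZ01 : ∀ ω, Z ω = 0 ∨ Z ω = 1) :
    Integrable (fun ω => (1 - Z ω) * f ω) μ :=
  hf.mul_of_zero_or_one (Z := fun ω => 1 - Z ω) (aestronglyMeasurable_const.sub hZ) fun ω => by
    rcases hZ01 ω with h | h <;> simp [h]

theorem integral_mul_condExp_of_stronglyMeasurable (hm : m ≤ mΩ) [SigmaFinite (μ.trim hm)]
    {w g : Ω → ℝ} (hw : StronglyMeasurable[m] w) (hwg : Integrable (w * g) μ)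
    (hg : Integrable g μ) :
    ∫ ω, w ω * μ[g|m] ω ∂μ = ∫ ω, w ω * g ω ∂μ :=
  calc ∫ ω, w ω * μ[g|m] ω ∂μ = ∫ ω, μ[w * g|m] ω ∂μ :=
        integral_congr_ae (condExp_mul_of_stronglyMeasurable_left hw hwg hg).symm
    _ = ∫ ω, w ω * g ω ∂μ := integral_condExp hm

theorem condExp_eq_mul_condExp_of_sensitivity {Z f e ε : Ω → ℝ} (hf : Integrable f μ)
    (hZ : AEStronglyMeasurable Z μ) (hZ01 : ∀ ω, Z ω = 0 ∨ Z ω = 1)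
    (he : ∀ᵐ ω ∂μ, e ω < 1)
    (hsens : ∀ᵐ ω ∂μ, (1 - e ω) * μ[fun ω' => Z ω' * f ω'|m] ω
        = ε ω * e ω * μ[fun ω' => (1 - Z ω') * f ω'|m] ω) :
    μ[f|m] =ᵐ[μ] fun ω =>
      (e ω * ε ω + 1 - e ω) / (1 - e ω) * μ[fun ω' => (1 - Z ω') * f ω'|m] ω := by
  have hsplit : μ[f|m] =ᵐ[μ]
      μ[fun ω => Z ω * f ω|m] + μ[fun ω => (1 - Z ω) * f ω|m] :=
    (condExp_congr_ae (g := (fun ω => Z ω * f ω) + fun ω => (1 - Z ω) * f ω)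
      (.of_forall fun ω => by rw [Pi.add_apply]; ring)).trans
      (condExp_add (hf.mul_of_zero_or_one hZ hZ01) (hf.one_sub_mul_of_zero_or_one hZ hZ01) m)
  filter_upwards [hsplit, he, hsens] with ω hω he hs
  have : 1 - e ω ≠ 0 := by linarith
  rw [hω, Pi.add_apply]
  field_simp
  linarith

end MeasureTheory

theorem ipw_identification_control
    {Ω : Type*} [F : MeasurableSpace Ω] (P : Measure Ω) [IsProbabilityMeasure P]
    (Z Y1 Y0 Y : Ω → ℝ)
    (hZmeas : Measurable Z) (hZ01 : ∀ ω, Z ω = 0 ∨ Z ω = 1)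
    (hY0int : Integrable Y0 P)
    (hYdef : ∀ ω, Y ω = Z ω * Y1 ω + (1 - Z ω) * Y0 ω)
    (mX : MeasurableSpace Ω) (hmX : mX ≤ F)
    (eX : Ω → ℝ) (heXmeas : Measurable[mX] eX)
    (hov : ∀ᵐ ω ∂P, 0 < eX ω ∧ eX ω < 1)
    (eps0 : Ω → ℝ)
    (heps0meas : Measurable[mX] eps0)
    (hsens0 : ∀ᵐ ω ∂P, (1 - eX ω) * (P[fun ω' => Z ω' * Y0 ω'|mX]) ω
        = eps0 ω * eX ω * (P[fun ω' => (1 - Z ω') * Y0 ω'|mX]) ω)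
    (hint1 : Integrable
      (fun ω => (eX ω * eps0 ω + 1 - eX ω) * ((1 - Z ω) * Y ω) / (1 - eX ω)) P) :
    ∫ ω, Y0 ω ∂P
      = ∫ ω, (eX ω * eps0 ω + 1 - eX ω) * ((1 - Z ω) * Y ω) / (1 - eX ω) ∂P := by
  set w : Ω → ℝ := fun ω => (eX ω * eps0 ω + 1 - eX ω) / (1 - eX ω)
  set g : Ω → ℝ := fun ω => (1 - Z ω) * Y0 ω
  have hipw : ∀ ω, (eX ω * eps0 ω + 1 - eX ω) * ((1 - Z ω) * Y ω) / (1 - eX ω) = w ω * g ω :=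
    fun ω => by rcases hZ01 ω with h | h <;> simp [w, g, hYdef, h, div_mul_eq_mul_div]
  have hw : StronglyMeasurable[mX] w :=
    ((((heXmeas.mul heps0meas).add measurable_const).sub heXmeas).div
      (measurable_const.sub heXmeas)).stronglyMeasurable
  have hcond := condExp_eq_mul_condExp_of_sensitivity (m := mX) hY0int
    hZmeas.aestronglyMeasurable hZ01 (hov.mono fun _ h => h.2) hsens0
  calc ∫ ω, Y0 ω ∂P = ∫ ω, P[Y0|mX] ω ∂P := (integral_condExp hmX).symm
    _ = ∫ ω, w ω * P[g|mX] ω ∂P := integral_congr_ae hcond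
    _ = ∫ ω, w ω * g ω ∂P := integral_mul_condExp_of_stronglyMeasurable hmX hw
          (hint1.congr (.of_forall hipw)) (hY0int.one_sub_mul_of_zero_or_one
            hZmeas.aestronglyMeasurable hZ01)
    _ = _ := by simp only [hipw]
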